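/- Let φ : X̂ → ℝ be continuous, bi-scaling-invariant, G-invariant and g̃-admissible, with sup φ = 0 over X̂. Then for every real ζ > 0, (φ−ψ̃)((1,…,1,ζ,…,ζ),(1,…,1)) ≥ 0, where in the first vector the value 1 occupies the first k+1 coordinates and ζ the last m−k coordinates. -/

import Mathlib

open Complex MeasureTheory Finset

noncomputable section

/-- Squared norm of a complex vector. -/
def nsq {n : ℕ} (z : Fin n → ℂ) : ℝ := ∑ i, ‖z i‖ ^ 2

/-- Laplacian at a point of a real-valued function of one complex variable. -/
def lap (f : ℂ → ℝ) (t : ℂ) : ℝ :=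
  lineDeriv ℝ (fun s => lineDeriv ℝ f s 1) t 1 +
  lineDeriv ℝ (fun s => lineDeriv ℝ f s Complex.I) t Complex.I

/-- The point of `Fin (m+1)` corresponding to an index in `{0,...,k}`. -/
def embX (m k : ℕ) (hkm : k ≤ m) (i : Fin (k + 1)) : Fin (m + 1) :=
  ⟨(i : ℕ), by have := i.isLt; omega⟩

/-- Points of `(ℂ^{m+1}\{0}) × (ℂ^{k+1}\{0})` lifting the blow-up X. -/
def inXhat (m k : ℕ) (hkm : k ≤ m)
    (p : (Fin (m + 1) → ℂ) × (Fin (k + 1) → ℂ)) : Prop :=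
  p.1 ≠ 0 ∧ p.2 ≠ 0 ∧
    ∀ i j : Fin (k + 1),
      p.1 (embX m k hkm i) * p.2 j = p.1 (embX m k hkm j) * p.2 i

def psiX1 (m k : ℕ) (p : (Fin (m + 1) → ℂ) × (Fin (k + 1) → ℂ)) : ℝ :=
  Real.log
    ((∏ i ∈ Finset.univ.filter (fun i : Fin (m + 1) => (i : ℕ) ≤ k),
        ‖p.1 i‖) ^ (2 * ((m : ℝ) + 1 - (k : ℝ)) / ((k : ℝ) + 1)) *
      (∏ j : Fin (k + 1), ‖p.2 j‖) ^ (2 * (k : ℝ) / ((k : ℝ) + 1)) /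
      (nsq p.1 ^ ((m : ℝ) + 1 - (k : ℝ)) * nsq p.2 ^ (k : ℝ)))

def psiX2 (m k : ℕ) (p : (Fin (m + 1) → ℂ) × (Fin (k + 1) → ℂ)) : ℝ :=
  Real.log
    ((∏ i ∈ Finset.univ.filter (fun i : Fin (m + 1) => k + 1 ≤ (i : ℕ)),
        ‖p.1 i‖) ^ (2 * ((m : ℝ) + 1 - (k : ℝ)) / ((m : ℝ) - (k : ℝ))) *
      (∏ j : Fin (k + 1), ‖p.2 j‖) ^ (2 * (k : ℝ) / ((k : ℝ) + 1)) /
      (nsq p.1 ^ ((m : ℝ) + 1 - (k : ℝ)) * nsq p.2 ^ (k : ℝ)))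

def psiX (m k : ℕ) (p : (Fin (m + 1) → ℂ) × (Fin (k + 1) → ℂ)) : ℝ :=
  min (psiX1 m k p) (psiX2 m k p)

/-- Bi-scaling invariance. -/
def BiScalInv (m k : ℕ) (φ : ((Fin (m + 1) → ℂ) × (Fin (k + 1) → ℂ)) → ℝ) : Prop :=
  ∀ lam mu : ℂ, lam ≠ 0 → mu ≠ 0 →
    ∀ p : (Fin (m + 1) → ℂ) × (Fin (k + 1) → ℂ), φ (lam • p.1, mu • p.2) = φ p

/-- Invariance under the group G acting on X. -/
def GInvX (m k : ℕ) (hkm : k ≤ m)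
    (φ : ((Fin (m + 1) → ℂ) × (Fin (k + 1) → ℂ)) → ℝ) : Prop :=
  (∀ i j : Fin (k + 1), ∀ p : (Fin (m + 1) → ℂ) × (Fin (k + 1) → ℂ),
      φ (p.1 ∘ Equiv.swap (embX m k hkm i) (embX m k hkm j), p.2 ∘ Equiv.swap i j) = φ p) ∧
  (∀ i j : Fin (m + 1), k + 1 ≤ (i : ℕ) → k + 1 ≤ (j : ℕ) →
      ∀ p : (Fin (m + 1) → ℂ) × (Fin (k + 1) → ℂ),
      φ (p.1 ∘ Equiv.swap i j, p.2) = φ p) ∧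
  (∀ l : Fin (k + 1), ∀ θ : ℝ, ∀ p : (Fin (m + 1) → ℂ) × (Fin (k + 1) → ℂ),
      φ (Function.update p.1 (embX m k hkm l)
            (Complex.exp ((θ : ℂ) * Complex.I) * p.1 (embX m k hkm l)),
         Function.update p.2 l (Complex.exp ((θ : ℂ) * Complex.I) * p.2 l)) = φ p) ∧
  (∀ l : Fin (m + 1), k + 1 ≤ (l : ℕ) → ∀ θ : ℝ,
      ∀ p : (Fin (m + 1) → ℂ) × (Fin (k + 1) → ℂ),
      φ (Function.update p.1 l (Complex.exp ((θ : ℂ) * Complex.I) * p.1 l), p.2) = φ p)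

/-- A vector tangent to the orbit of the bi-scaling action at p. -/
def tangentX (m k : ℕ) (p v : (Fin (m + 1) → ℂ) × (Fin (k + 1) → ℂ)) : Prop :=
  ∃ a b : ℂ, v = (a • p.1, b • p.2)

/-- Local potential of g̃ plus φ along a curve. -/
def FX (m k : ℕ) (φ : ((Fin (m + 1) → ℂ) × (Fin (k + 1) → ℂ)) → ℝ)
    (c : ℂ → (Fin (m + 1) → ℂ) × (Fin (k + 1) → ℂ)) (t : ℂ) : ℝ :=
  ((m : ℝ) + 1 - (k : ℝ)) * Real.log (nsq (c t).1) +
    (k : ℝ) * Real.log (nsq (c t).2) + φ (c t)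

/-- g̃-admissibility. -/
def AdmX (m k : ℕ) (hkm : k ≤ m)
    (φ : ((Fin (m + 1) → ℂ) × (Fin (k + 1) → ℂ)) → ℝ) : Prop :=
  ∀ r : ℝ, 0 < r → ∀ c : ℂ → (Fin (m + 1) → ℂ) × (Fin (k + 1) → ℂ),
    DifferentiableOn ℂ c (Metric.ball 0 r) →
    (∀ t ∈ Metric.ball (0 : ℂ) r, inXhat m k hkm (c t)) →
    ContDiffOn ℝ (⊤ : ℕ∞) (FX m k φ c) (Metric.ball 0 r) ∧
    (∀ t ∈ Metric.ball (0 : ℂ) r, 0 ≤ lap (FX m k φ c) t) ∧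
    (∀ t ∈ Metric.ball (0 : ℂ) r, ¬ tangentX m k (c t) (deriv c t) →
      0 < lap (FX m k φ c) t)

namespace Stmt13Aux

lemma embX_inj {m k : ℕ} (h : k ≤ m) : Function.Injective (embX m k h) :=
  fun a b hab => by rw [Fin.ext_iff] at hab ⊢; exact hab

lemma rotInv {m k : ℕ} (h : k ≤ m) {φ : ((Fin (m + 1) → ℂ) × (Fin (k + 1) → ℂ)) → ℝ}
    (hG : GInvX m k h φ) (θ : Fin (m + 1) → ℝ)
    (p : (Fin (m + 1) → ℂ) × (Fin (k + 1) → ℂ)) :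
    φ (fun i => Complex.exp ((θ i : ℂ) * Complex.I) * p.1 i,
       fun j => Complex.exp ((θ (embX m k h j) : ℂ) * Complex.I) * p.2 j) = φ p := by
  suffices H : ∀ S : Finset (Fin (m + 1)),
      φ (fun i => Complex.exp ((↑(if i ∈ S then θ i else 0) : ℂ) * Complex.I) * p.1 i,
         fun j => Complex.exp ((↑(if embX m k h j ∈ S then θ (embX m k h j) else 0) : ℂ)
            * Complex.I) * p.2 j) = φ p by
    simpa using H Finset.univ
  intro S
  induction S using Finset.induction_on with
  | empty => simp
  | @insert a S ha IH =>
    by_cases hak : (a : ℕ) ≤ k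
    · have hl : (a : ℕ) < k + 1 := by omega
      have hemb : embX m k h ⟨(a : ℕ), hl⟩ = a := Fin.ext rfl
      have key := hG.2.2.1 ⟨(a : ℕ), hl⟩ (θ a)
        (fun i => Complex.exp ((↑(if i ∈ S then θ i else 0) : ℂ) * Complex.I) * p.1 i,
         fun j => Complex.exp ((↑(if embX m k h j ∈ S then θ (embX m k h j) else 0) : ℂ)
            * Complex.I) * p.2 j)
      rw [IH] at key
      rw [← key]
      congr 1
      refine Prod.ext ?_ ?_ <;> dsimp only
      · funext i
        rcases eq_or_ne i a with rfl | hia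
        · rw [hemb, Function.update_self]
          simp [ha, ← Complex.exp_add]
        · rw [hemb, Function.update_of_ne hia]
          simp [Finset.mem_insert, hia]
      · funext j
        rcases eq_or_ne j ⟨(a : ℕ), hl⟩ with rfl | hja
        · rw [Function.update_self, hemb]
          simp [ha, ← Complex.exp_add]
        · rw [Function.update_of_ne hja]
          have : embX m k h j ≠ a := by
            rw [← hemb]; exact fun hc => hja (embX_inj h hc)
          simp [Finset.mem_insert, this]
    · have key := hG.2.2.2 a (by omega) (θ a)
        (fun i => Complex.exp ((↑(if i ∈ S then θ i else 0) : ℂ) * Complex.I) * p.1 i,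
         fun j => Complex.exp ((↑(if embX m k h j ∈ S then θ (embX m k h j) else 0) : ℂ)
            * Complex.I) * p.2 j)
      rw [IH] at key
      rw [← key]
      congr 1
      refine Prod.ext ?_ ?_ <;> dsimp only
      · funext i
        rcases eq_or_ne i a with rfl | hia
        · rw [Function.update_self]
          simp [ha, ← Complex.exp_add]
        · rw [Function.update_of_ne hia]
          simp [Finset.mem_insert, hia]
      · funext j
        have hne : embX m k h j ≠ a := by
          intro hc
          have hv := congrArg Fin.val hc
          have hj := j.isLt
          simp [embX] at hv
          omega
        simp [Finset.mem_insert, hne]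



lemma cexp_neg_arg_mul (z : ℂ) :
    Complex.exp ((↑(-Complex.arg z) : ℂ) * Complex.I) * z = (‖z‖ : ℂ) := by
  have h := Complex.norm_mul_exp_arg_mul_I z
  calc Complex.exp ((↑(-Complex.arg z) : ℂ) * Complex.I) * z
      = Complex.exp ((↑(-Complex.arg z) : ℂ) * Complex.I) *
        ((‖z‖ : ℂ) * Complex.exp ((Complex.arg z : ℂ) * Complex.I)) := by rw [h]
  _ = (‖z‖ : ℂ) *
        Complex.exp ((↑(-Complex.arg z) : ℂ) * Complex.I + (Complex.arg z : ℂ) * Complex.I) := by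
      rw [Complex.exp_add]; ring
  _ = (‖z‖ : ℂ) := by
      rw [show (↑(-Complex.arg z) : ℂ) * Complex.I + (Complex.arg z : ℂ) * Complex.I = 0 by
        push_cast; ring, Complex.exp_zero, mul_one]

lemma exists_y {m k : ℕ} (hm : 2 ≤ m) (hk : 1 ≤ k) (hkm1 : k ≤ m - 1) (h : k ≤ m)
    {φ : ((Fin (m + 1) → ℂ) × (Fin (k + 1) → ℂ)) → ℝ}
    (hcont : ContinuousOn φ {p | inXhat m k h p})
    (hscal : BiScalInv m k φ) (hG : GInvX m k h φ)
    (hsup : IsLUB (φ '' {p | inXhat m k h p}) 0)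
    {ε : ℝ} (hε : 0 < ε) :
    ∃ y : Fin (m + 1) → ℝ,
      -ε < φ (fun i => (Real.exp (y i) : ℂ), fun j => (Real.exp (y (embX m k h j)) : ℂ)) := by
  have hkm : k < m := by omega
  obtain ⟨q, hq, hφq⟩ : ∃ q ∈ φ '' {p | inXhat m k h p}, -ε < q := by
    by_contra hcon
    push_neg at hcon
    have hub : (-ε) ∈ upperBounds (φ '' {p | inXhat m k h p}) := fun x hx => (hcon x hx)
    have := hsup.2 hub
    linarith
  obtain ⟨p, hp, rfl⟩ := hq
  have hpX : inXhat m k h p := hp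
  obtain ⟨j₀, hj₀⟩ : ∃ j, p.2 j ≠ 0 := Function.ne_iff.mp hpX.2.1
  have hcol : ∀ i, p.1 (embX m k h i) = (p.1 (embX m k h j₀) / p.2 j₀) * p.2 i := by
    intro i
    rw [div_mul_eq_mul_div, ← hpX.2.2 i j₀, mul_div_assoc, div_self hj₀, mul_one]
  set lam : ℂ := p.1 (embX m k h j₀) / p.2 j₀ with hlam
  set mu : ℂ := if lam = 0 then 1 else lam / (‖lam‖ : ℂ) with hmu
  have hnu : ∀ δ : ℝ, 0 < δ → lam + ↑δ * mu ≠ 0 := by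
    intro δ hδ
    rcases eq_or_ne lam 0 with h0 | h0
    · simp [hmu, h0, Complex.ofReal_ne_zero, ne_of_gt hδ]
    · rw [hmu, if_neg h0]
      have habs : (0:ℝ) < ‖lam‖ := norm_pos_iff.mpr h0
      rw [show lam + ↑δ * (lam / ↑(‖lam‖)) = lam * (1 + ↑δ / ↑(‖lam‖)) by ring]
      apply mul_ne_zero h0
      intro hc
      have hc' : ((1 + δ / ‖lam‖ : ℝ) : ℂ) = 0 := by push_cast; linear_combination hc
      rw [Complex.ofReal_eq_zero] at hc'
      have hpos : 0 < 1 + δ / ‖lam‖ := by positivity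
      linarith
  set zeta' : ℝ → (Fin (k+1) → ℂ) := fun δ j => if p.2 j = 0 then (δ:ℂ) else p.2 j with hzeta'
  set z' : ℝ → (Fin (m+1) → ℂ) := fun δ i =>
    if hik : (i:ℕ) ≤ k then (lam + ↑δ * mu) * zeta' δ ⟨(i:ℕ), by omega⟩
    else (if p.1 i = 0 then (δ:ℂ) else p.1 i) with hz'
  have hz'emb : ∀ (δ : ℝ) (j : Fin (k+1)), z' δ (embX m k h j) = (lam + ↑δ * mu) * zeta' δ j := by
    intro δ j
    have hv : ((embX m k h j : Fin (m+1)) : ℕ) = (j : ℕ) := rfl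
    simp only [hz']
    rw [dif_pos (show ((embX m k h j : Fin (m+1)) : ℕ) ≤ k by rw [hv]; omega)]
    rfl
  have hzeta0 : zeta' 0 = p.2 := by
    funext j
    simp only [hzeta']
    split_ifs with h0
    · simp [h0]
    · rfl
  have hz0 : z' 0 = p.1 := by
    funext i
    simp only [hz']
    split_ifs with hik h0
    · have hc := hcol ⟨(i:ℕ), by omega⟩
      rw [show embX m k h ⟨(i:ℕ), by omega⟩ = i from Fin.ext rfl] at hc
      rw [hzeta0]
      simp only [Complex.ofReal_zero, zero_mul, add_zero]
      exact hc.symm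
    · simp [h0]
    · rfl
  have hpdcont : Continuous (fun δ : ℝ => (z' δ, zeta' δ)) := by
    apply Continuous.prodMk
    · apply continuous_pi
      intro i
      by_cases hik : (i:ℕ) ≤ k
      · simp only [hz', dif_pos hik, hzeta']
        split_ifs with h0
        · fun_prop
        · fun_prop
      · simp only [hz', dif_neg hik]
        split_ifs with h0
        · fun_prop
        · fun_prop
    · apply continuous_pi
      intro j
      simp only [hzeta']
      split_ifs with h0
      · fun_prop
      · fun_prop
  have hmem : ∀ δ : ℝ, 0 < δ → inXhat m k h (z' δ, zeta' δ) := by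
    intro δ hδ
    refine ⟨?_, ?_, ?_⟩
    · intro hc
      have hlast : ¬ ((Fin.last m : Fin (m+1)) : ℕ) ≤ k := by
        simp only [Fin.val_last]; omega
      have := congrFun hc (Fin.last m)
      simp only [hz', dif_neg hlast, Pi.zero_apply] at this
      split_ifs at this with h0
      · exact (Complex.ofReal_ne_zero.mpr (ne_of_gt hδ)) this
      · exact h0 this
    · intro hc
      have := congrFun hc j₀
      simp only [hzeta', if_neg hj₀, Pi.zero_apply] at this
      exact hj₀ this
    · intro i j
      show z' δ (embX m k h i) * zeta' δ j = z' δ (embX m k h j) * zeta' δ i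
      rw [hz'emb δ i, hz'emb δ j]
      ring
  have hc1 : ContinuousOn (fun δ : ℝ => φ (z' δ, zeta' δ)) (Set.Ici 0) := by
    apply hcont.comp hpdcont.continuousOn
    intro δ hδ
    rcases eq_or_lt_of_le (Set.mem_Ici.mp hδ) with heq | hpos
    · show inXhat m k h (z' δ, zeta' δ)
      rw [← heq, hz0, hzeta0]
      exact hpX
    · exact hmem δ hpos
  have hval : φ (z' 0, zeta' 0) = φ p := by rw [hz0, hzeta0]
  have htd := (hc1 0 Set.self_mem_Ici).tendsto
  simp only [hval] at htd
  have hev : ∀ᶠ δ in nhdsWithin 0 (Set.Ici 0), -ε < φ (z' δ, zeta' δ) :=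
    htd (Ioi_mem_nhds hφq)
  have hev' : ∀ᶠ δ in nhdsWithin 0 (Set.Ioi 0), -ε < φ (z' δ, zeta' δ) :=
    hev.filter_mono (nhdsWithin_mono 0 Set.Ioi_subset_Ici_self)
  obtain ⟨δ, hφδ, hδpos⟩ := (hev'.and self_mem_nhdsWithin).exists
  have hν := hnu δ hδpos
  have hsc := hscal 1 (lam + ↑δ * mu) one_ne_zero hν (z' δ, zeta' δ)
  have hpair : ((1:ℂ) • z' δ, (lam + ↑δ * mu) • zeta' δ)
      = (z' δ, fun j => z' δ (embX m k h j)) := by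
    refine Prod.ext (one_smul _ _) ?_
    funext j
    simp only [Pi.smul_apply, smul_eq_mul]
    exact (hz'emb δ j).symm
  set w : Fin (m+1) → ℂ := z' δ with hw
  have hwne : ∀ i, w i ≠ 0 := by
    intro i
    simp only [hw, hz']
    by_cases hik : (i:ℕ) ≤ k
    · rw [dif_pos hik]
      apply mul_ne_zero hν
      simp only [hzeta']
      split_ifs with h0
      · exact Complex.ofReal_ne_zero.mpr (ne_of_gt hδpos)
      · exact h0
    · rw [dif_neg hik]
      split_ifs with h0
      · exact Complex.ofReal_ne_zero.mpr (ne_of_gt hδpos)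
      · exact h0
  have hφw : -ε < φ (w, fun j => w (embX m k h j)) := by
    calc (-ε) < φ (z' δ, zeta' δ) := hφδ
    _ = φ (w, fun j => w (embX m k h j)) := by rw [← hsc, hpair]
  refine ⟨fun i => Real.log (‖w i‖), ?_⟩
  have hrot := rotInv h hG (fun i => -Complex.arg (w i)) (w, fun j => w (embX m k h j))
  have h1 : (fun i => Complex.exp ((↑(-Complex.arg (w i)) : ℂ) * Complex.I) * w i)
      = fun i => (‖w i‖ : ℂ) := funext fun i => cexp_neg_arg_mul (w i)
  have h2 : (fun j => Complex.exp ((↑(-Complex.arg (w (embX m k h j))) : ℂ) * Complex.I)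
        * w (embX m k h j))
      = fun j => (‖w (embX m k h j)‖ : ℂ) :=
    funext fun j => cexp_neg_arg_mul (w (embX m k h j))
  rw [h1, h2] at hrot
  have hexp : ∀ i, (Real.exp (Real.log (‖w i‖)) : ℂ) = (‖w i‖ : ℂ) := by
    intro i
    rw [Real.exp_log (norm_pos_iff.mpr (hwne i))]
  calc (-ε) < φ (w, fun j => w (embX m k h j)) := hφw
  _ = φ (fun i => (‖w i‖ : ℂ), fun j => (‖w (embX m k h j)‖ : ℂ)) :=
      hrot.symm
  _ = _ := by
      congr 1
      refine Prod.ext ?_ ?_ <;> dsimp only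
      · funext i; exact (hexp i).symm
      · funext j; exact (hexp (embX m k h j)).symm



open scoped ContDiff in
lemma curveC_all {m k : ℕ} (hm : 2 ≤ m) (hk : 1 ≤ k) (hkm1 : k ≤ m - 1) (h : k ≤ m)
    {φ : ((Fin (m + 1) → ℂ) × (Fin (k + 1) → ℂ)) → ℝ}
    (hG : GInvX m k h φ) (hadm : AdmX m k h φ) (P d : Fin (m+1) → ℝ) :
    (∀ t : ℂ, inXhat m k h
        ((fun t : ℂ => (fun i => Complex.exp ((P i : ℂ) + (d i : ℂ) * t),
          fun j => Complex.exp ((P (embX m k h j) : ℂ) + (d (embX m k h j) : ℂ) * t))) t)) ∧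
    ConvexOn ℝ Set.univ (fun x : ℝ => FX m k φ
      (fun t : ℂ => (fun i => Complex.exp ((P i : ℂ) + (d i : ℂ) * t),
        fun j => Complex.exp ((P (embX m k h j) : ℂ) + (d (embX m k h j) : ℂ) * t))) ↑x) := by
  set C : ℂ → (Fin (m + 1) → ℂ) × (Fin (k + 1) → ℂ) :=
    fun t : ℂ => (fun i => Complex.exp ((P i : ℂ) + (d i : ℂ) * t),
      fun j => Complex.exp ((P (embX m k h j) : ℂ) + (d (embX m k h j) : ℂ) * t)) with hC
  have hmem : ∀ t : ℂ, inXhat m k h (C t) := by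
    intro t
    refine ⟨?_, ?_, ?_⟩
    · intro hc
      exact Complex.exp_ne_zero _ (congrFun hc 0)
    · intro hc
      exact Complex.exp_ne_zero _ (congrFun hc 0)
    · intro i j
      exact mul_comm _ _
  have hdiff : Differentiable ℂ C := by
    apply Differentiable.prodMk
    · apply differentiable_pi.mpr
      intro i
      apply Complex.differentiable_exp.comp
      exact (differentiable_const _).add ((differentiable_const _).mul differentiable_id)
    · apply differentiable_pi.mpr
      intro j
      apply Complex.differentiable_exp.comp
      exact (differentiable_const _).add ((differentiable_const _).mul differentiable_id)
  refine ⟨hmem, ?_⟩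
  set u : ℂ → ℝ := FX m k φ C with hu
  set U : ℝ → ℝ := fun x => u ↑x with hU
  -- invariance under imaginary translation
  have hre : ∀ t : ℂ, u t = U t.re := by
    intro t
    have hcomp : ∀ a b : ℝ, Complex.exp ((a:ℂ) + (b:ℂ) * t)
        = Complex.exp ((↑(b * t.im) : ℂ) * Complex.I) * Complex.exp ((a:ℂ) + (b:ℂ) * ↑t.re) := by
      intro a b
      rw [← Complex.exp_add]
      congr 1
      push_cast
      linear_combination (-(b:ℂ)) * Complex.re_add_im t
    have habs : ∀ a b : ℝ, ‖Complex.exp ((a:ℂ) + (b:ℂ) * t)‖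
        = ‖Complex.exp ((a:ℂ) + (b:ℂ) * ↑t.re)‖ := by
      intro a b
      rw [Complex.norm_exp, Complex.norm_exp]
      congr 1
      simp
    have h1 : nsq (C t).1 = nsq (C ↑t.re).1 := by
      unfold nsq
      exact Finset.sum_congr rfl fun i _ => by rw [show ‖(C t).1 i‖
        = ‖(C ↑t.re).1 i‖ from habs _ _]
    have h2 : nsq (C t).2 = nsq (C ↑t.re).2 := by
      unfold nsq
      exact Finset.sum_congr rfl fun j _ => by rw [show ‖(C t).2 j‖
        = ‖(C ↑t.re).2 j‖ from habs _ _]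
    have hpaireq : C t =
        (fun i => Complex.exp ((↑(d i * t.im) : ℂ) * Complex.I) * (C ↑t.re).1 i,
         fun j => Complex.exp ((↑(d (embX m k h j) * t.im) : ℂ) * Complex.I) * (C ↑t.re).2 j) := by
      refine Prod.ext ?_ ?_ <;> dsimp only [hC] <;> funext i <;> exact hcomp _ _
    have hφeq : φ (C t) = φ (C ↑t.re) := by
      rw [hpaireq]
      exact rotInv h hG (fun i => d i * t.im) (C ↑t.re)
    show FX m k φ C t = FX m k φ C ↑t.re
    unfold FX
    rw [h1, h2, hφeq]
  -- smoothness and subharmonicity at each real point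
  have hkey : ∀ x : ℝ, ContDiffAt ℝ ((⊤ : ℕ∞) : WithTop ℕ∞) u ↑x ∧ 0 ≤ lap u ↑x := by
    intro x
    have hr : (0:ℝ) < |x| + 1 := by positivity
    have hb : (↑x : ℂ) ∈ Metric.ball (0:ℂ) (|x| + 1) := by
      rw [Metric.mem_ball, dist_zero_right, Complex.norm_real, Real.norm_eq_abs]
      linarith
    obtain ⟨hc1, hc2, _⟩ := hadm (|x|+1) hr C hdiff.differentiableOn (fun t _ => hmem t)
    exact ⟨hc1.contDiffAt (Metric.isOpen_ball.mem_nhds hb), hc2 _ hb⟩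
  have hUsm : ContDiff ℝ ((⊤ : ℕ∞) : WithTop ℕ∞) U := by
    rw [contDiff_iff_contDiffAt]
    intro x
    exact (hkey x).1.comp x (Complex.ofRealCLM.contDiff.contDiffAt)
  have hUinf : ContDiff ℝ ∞ U := hUsm.of_le le_rfl
  have hU1 : Differentiable ℝ U := hUsm.differentiable (by simp)
  have hderivU : ContDiff ℝ ∞ (deriv U) := (contDiff_infty_iff_deriv.mp hUinf).2
  have hU2 : Differentiable ℝ (deriv U) := hderivU.differentiable (by simp)
  -- identify the second derivative with the Laplacian
  have hline1 : ∀ s : ℂ, lineDeriv ℝ u s 1 = deriv U s.re := by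
    intro s
    have heq : (fun τ : ℝ => u (s + τ • (1:ℂ))) = fun τ : ℝ => U (s.re + τ) := by
      funext τ
      rw [hre]
      congr 1
      simp [Complex.real_smul]
    rw [lineDeriv, heq, deriv_comp_const_add, add_zero]
  have hline2 : ∀ s : ℂ, lineDeriv ℝ u s Complex.I = 0 := by
    intro s
    have heq : (fun τ : ℝ => u (s + τ • Complex.I)) = fun _ : ℝ => U s.re := by
      funext τ
      rw [hre]
      congr 1
      simp [Complex.real_smul]
    rw [lineDeriv, heq, deriv_const]
  have hlapeq : ∀ x : ℝ, deriv (deriv U) x = lap u ↑x := by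
    intro x
    unfold lap
    have e2 : lineDeriv ℝ (fun _ : ℂ => (0:ℝ)) (↑x : ℂ) Complex.I = 0 := by
      rw [lineDeriv]; simp
    have e1 : lineDeriv ℝ (fun s : ℂ => deriv U s.re) (↑x : ℂ) 1 = deriv (deriv U) x := by
      have heq : (fun τ : ℝ => (fun s : ℂ => deriv U s.re) ((↑x : ℂ) + τ • (1:ℂ)))
          = fun τ : ℝ => deriv U (x + τ) := by
        funext τ
        simp [Complex.real_smul]
      rw [lineDeriv, heq, deriv_comp_const_add, add_zero]
    rw [show (fun s => lineDeriv ℝ u s 1) = fun s : ℂ => deriv U s.re from funext hline1,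
        show (fun s => lineDeriv ℝ u s Complex.I) = fun _ : ℂ => (0:ℝ) from funext hline2,
        e1, e2, add_zero]
  have hnonneg : ∀ x : ℝ, 0 ≤ deriv^[2] U x := by
    intro x
    have : deriv^[2] U x = deriv (deriv U) x := by
      simp [Function.iterate_succ, Function.iterate_zero]
    rw [this, hlapeq x]
    exact (hkey x).2
  exact convexOn_univ_of_deriv2_nonneg hU1 hU2 hnonneg

end Stmt13Aux

set_option maxHeartbeats 2000000 in
open Stmt13Aux in
theorem stmt13 (m k : ℕ) (hm : 2 ≤ m) (hk : 1 ≤ k) (hkm : k ≤ m - 1)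
    (φ : ((Fin (m + 1) → ℂ) × (Fin (k + 1) → ℂ)) → ℝ)
    (hcont : ContinuousOn φ {p | inXhat m k (by omega) p})
    (hscal : BiScalInv m k φ) (hG : GInvX m k (by omega) φ)
    (hadm : AdmX m k (by omega) φ)
    (hsup : IsLUB (φ '' {p | inXhat m k (by omega) p}) 0)
    (ζ : ℝ) (hζ : 0 < ζ) :
    let zB : Fin (m + 1) → ℂ := fun i => if (i : ℕ) ≤ k then 1 else (ζ : ℂ)
    let oneζ : Fin (k + 1) → ℂ := fun _ => 1
    0 ≤ φ (zB, oneζ) - psiX m k (zB, oneζ) := by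
  have h : k ≤ m := by omega
  have hkm' : k < m := by omega
  show 0 ≤ φ ((fun i : Fin (m + 1) => if (i : ℕ) ≤ k then 1 else (ζ : ℂ)),
        (fun _ : Fin (k + 1) => (1 : ℂ)))
      - psiX m k ((fun i : Fin (m + 1) => if (i : ℕ) ≤ k then 1 else (ζ : ℂ)),
        (fun _ : Fin (k + 1) => (1 : ℂ)))
  set zB : Fin (m + 1) → ℂ := fun i => if (i : ℕ) ≤ k then 1 else (ζ : ℂ) with hzB
  set oneζ : Fin (k + 1) → ℂ := fun _ => (1 : ℂ) with honeζ
  set α : ℝ := (m : ℝ) + 1 - (k : ℝ) with hα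
  have hkR : (k : ℝ) < (m : ℝ) := by exact_mod_cast hkm'
  have hα0 : 0 < α := by rw [hα]; linarith
  set s : ℝ := Real.log ζ with hs
  set N1 : ℝ := ((k : ℝ) + 1) + ((m : ℝ) - (k : ℝ)) * ζ ^ 2 with hN1def
  set N2 : ℝ := (k : ℝ) + 1 with hN2def
  have hN1pos : 0 < N1 := by
    have h1 : 0 ≤ ((m : ℝ) - (k : ℝ)) * ζ ^ 2 := mul_nonneg (by linarith) (sq_nonneg ζ)
    rw [hN1def]; positivity
  have hN2pos : 0 < N2 := by rw [hN2def]; positivity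
  -- cardinalities
  have hfilter1 : (Finset.univ.filter (fun i : Fin (m + 1) => (i : ℕ) ≤ k))
      = Finset.map ⟨embX m k h, embX_inj h⟩ Finset.univ := by
    ext i
    simp only [Finset.mem_filter, Finset.mem_univ, true_and, Finset.mem_map,
      Function.Embedding.coeFn_mk]
    constructor
    · intro hik
      exact ⟨⟨(i : ℕ), by omega⟩, Fin.ext rfl⟩
    · rintro ⟨j, rfl⟩
      have : ((embX m k h j : Fin (m + 1)) : ℕ) = (j : ℕ) := rfl
      rw [this]; omega
  have hcard1 : (Finset.univ.filter (fun i : Fin (m + 1) => (i : ℕ) ≤ k)).card = k + 1 := by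
    rw [hfilter1, Finset.card_map, Finset.card_univ, Fintype.card_fin]
  have hfilterneg : (Finset.univ.filter (fun i : Fin (m + 1) => ¬ (i : ℕ) ≤ k))
      = Finset.univ.filter (fun i : Fin (m + 1) => k + 1 ≤ (i : ℕ)) := by
    apply Finset.filter_congr
    intro i _
    constructor
    · intro hh; simp at hh ⊢; omega
    · intro hh; simp at hh ⊢; omega
  have hcard2 : (Finset.univ.filter (fun i : Fin (m + 1) => k + 1 ≤ (i : ℕ))).card = m - k := by
    have := Finset.card_filter_add_card_filter_not
      (s := (Finset.univ : Finset (Fin (m + 1)))) (p := fun i : Fin (m + 1) => (i : ℕ) ≤ k)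
    rw [hfilterneg, hcard1, Finset.card_univ, Fintype.card_fin] at this
    omega
  -- nsq values
  have hnsq1 : nsq zB = N1 := by
    unfold nsq
    rw [← Finset.sum_filter_add_sum_filter_not Finset.univ (fun i : Fin (m + 1) => (i : ℕ) ≤ k)
      (fun i => ‖zB i‖ ^ 2)]
    have e1 : ∑ i ∈ Finset.univ.filter (fun i : Fin (m + 1) => (i : ℕ) ≤ k),
        ‖zB i‖ ^ 2 = (k : ℝ) + 1 := by
      calc ∑ i ∈ Finset.univ.filter (fun i : Fin (m + 1) => (i : ℕ) ≤ k),
          ‖zB i‖ ^ 2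
          = ∑ _i ∈ Finset.univ.filter (fun i : Fin (m + 1) => (i : ℕ) ≤ k), (1:ℝ) := by
            refine Finset.sum_congr rfl (fun i hi => ?_)
            simp only [Finset.mem_filter] at hi
            simp only [hzB, if_pos hi.2]
            simp
      _ = (k : ℝ) + 1 := by
            rw [Finset.sum_const, hcard1, nsmul_eq_mul, mul_one]
            push_cast; ring
    have e2 : ∑ i ∈ Finset.univ.filter (fun i : Fin (m + 1) => ¬ (i : ℕ) ≤ k),
        ‖zB i‖ ^ 2 = ((m : ℝ) - (k : ℝ)) * ζ ^ 2 := by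
      calc ∑ i ∈ Finset.univ.filter (fun i : Fin (m + 1) => ¬ (i : ℕ) ≤ k),
          ‖zB i‖ ^ 2
          = ∑ _i ∈ Finset.univ.filter (fun i : Fin (m + 1) => ¬ (i : ℕ) ≤ k), ζ ^ 2 := by
            refine Finset.sum_congr rfl (fun i hi => ?_)
            simp only [Finset.mem_filter] at hi
            simp only [hzB, if_neg hi.2]
            rw [Complex.norm_real, Real.norm_eq_abs, abs_of_pos hζ]
      _ = ((m : ℝ) - (k : ℝ)) * ζ ^ 2 := by
            rw [Finset.sum_const, hfilterneg, hcard2, nsmul_eq_mul]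
            congr 1
            rw [Nat.cast_sub h]
    rw [e1, e2, hN1def]
  have hnsq2 : nsq oneζ = N2 := by
    unfold nsq
    rw [honeζ, hN2def]
    simp
  -- psiX value
  have hψ : psiX m k (zB, oneζ)
      = min 0 (2 * α * s) - (α * Real.log N1 + (k : ℝ) * Real.log N2) := by
    have hprod1 : (∏ i ∈ Finset.univ.filter (fun i : Fin (m + 1) => (i : ℕ) ≤ k),
        ‖zB i‖) = 1 := by
      rw [Finset.prod_congr rfl (fun i hi => ?_), Finset.prod_const_one]
      simp only [Finset.mem_filter] at hi
      simp only [hzB, if_pos hi.2]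
      simp
    have hprodζ : (∏ j : Fin (k + 1), ‖oneζ j‖) = 1 := by
      rw [honeζ]; simp
    have hprod2 : (∏ i ∈ Finset.univ.filter (fun i : Fin (m + 1) => k + 1 ≤ (i : ℕ)),
        ‖zB i‖) = ζ ^ (m - k) := by
      rw [Finset.prod_congr rfl (fun i hi => ?_), Finset.prod_const, hcard2]
      simp only [Finset.mem_filter] at hi
      simp only [hzB, if_neg (show ¬ ((i:ℕ) ≤ k) by omega)]
      rw [Complex.norm_real, Real.norm_eq_abs, abs_of_pos hζ]
    have hD : Real.log (N1 ^ α * N2 ^ (k : ℝ))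
        = α * Real.log N1 + (k : ℝ) * Real.log N2 := by
      rw [Real.log_mul (Real.rpow_pos_of_pos hN1pos _).ne' (Real.rpow_pos_of_pos hN2pos _).ne',
        Real.log_rpow hN1pos, Real.log_rpow hN2pos]
    have hψ1 : psiX1 m k (zB, oneζ) = 0 - (α * Real.log N1 + (k : ℝ) * Real.log N2) := by
      unfold psiX1
      rw [show (zB, oneζ).1 = zB from rfl, show (zB, oneζ).2 = oneζ from rfl]
      rw [hprod1, hprodζ, Real.one_rpow, Real.one_rpow, one_mul, hnsq1, hnsq2]
      rw [Real.log_div one_ne_zero (by positivity), Real.log_one, hD]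
    have hψ2 : psiX2 m k (zB, oneζ) = 2 * α * s - (α * Real.log N1 + (k : ℝ) * Real.log N2) := by
      unfold psiX2
      rw [show (zB, oneζ).1 = zB from rfl, show (zB, oneζ).2 = oneζ from rfl]
      rw [hprod2, hprodζ, Real.one_rpow, mul_one, hnsq1, hnsq2]
      have hpow : ((ζ ^ (m - k) : ℝ)) ^ (2 * α / ((m : ℝ) - (k : ℝ))) = ζ ^ (2 * α) := by
        rw [← Real.rpow_natCast ζ (m - k), ← Real.rpow_mul hζ.le]
        congr 1
        rw [Nat.cast_sub h]
        have hne : (m:ℝ) - (k:ℝ) ≠ 0 := by linarith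
        field_simp
      rw [hpow, Real.log_div (Real.rpow_pos_of_pos hζ _).ne' (by positivity),
        Real.log_rpow hζ, hD]
    unfold psiX
    rw [hψ1, hψ2, min_sub_sub_right]
  rw [hψ]
  have hmain : min 0 (2 * α * s) ≤ φ (zB, oneζ) + (α * Real.log N1 + (k : ℝ) * Real.log N2) := by
    have hper : ∀ ε : ℝ, 0 < ε →
        min 0 (2 * α * s) ≤ φ (zB, oneζ) + (α * Real.log N1 + (k : ℝ) * Real.log N2) + 2 * ε := by
      intro ε hε
      obtain ⟨y, hy⟩ := exists_y hm hk hkm h hcont hscal hG hsup hε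
      set P : Fin (m + 1) → ℝ := fun i => if (i : ℕ) ≤ k then 0 else s with hP
      set dd : Fin (m + 1) → ℝ := fun i => y i - P i with hdd
      obtain ⟨hmemC, hconvU⟩ := curveC_all hm hk hkm h hG hadm P dd
      set C : ℂ → (Fin (m + 1) → ℂ) × (Fin (k + 1) → ℂ) :=
        fun t : ℂ => (fun i => Complex.exp ((P i : ℂ) + (dd i : ℂ) * t),
          fun j => Complex.exp ((P (embX m k h j) : ℂ) + (dd (embX m k h j) : ℂ) * t)) with hC
      set U : ℝ → ℝ := fun x => FX m k φ C ↑x with hU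
      have hPemb : ∀ j : Fin (k + 1), P (embX m k h j) = 0 := by
        intro j
        have hv : ((embX m k h j : Fin (m + 1)) : ℕ) = (j : ℕ) := rfl
        simp only [hP]
        rw [if_pos (show ((embX m k h j : Fin (m + 1)) : ℕ) ≤ k by rw [hv]; omega)]
      have hddemb : ∀ j : Fin (k + 1), dd (embX m k h j) = y (embX m k h j) := by
        intro j
        simp only [hdd]
        rw [hPemb j, sub_zero]
      have habsC : ∀ a b t : ℝ, ‖Complex.exp ((a : ℂ) + (b : ℂ) * (t : ℂ))‖
          = Real.exp (a + b * t) := by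
        intro a b t
        rw [Complex.norm_exp]
        congr 1
        simp
      set S1 : ℝ := ∑ i, Real.exp (y i) ^ 2 with hS1
      set T1 : ℝ := ∑ j : Fin (k + 1), Real.exp (y (embX m k h j)) ^ 2 with hT1
      set S2 : ℝ := ∑ i, Real.exp (y i + dd i) ^ 2 with hS2
      set T2 : ℝ := ∑ j : Fin (k + 1), Real.exp (y (embX m k h j) * 2) ^ 2 with hT2
      have hS1pos : 0 < S1 := Finset.sum_pos (fun i _ => by positivity) Finset.univ_nonempty
      have hT1pos : 0 < T1 := Finset.sum_pos (fun j _ => by positivity) Finset.univ_nonempty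
      have hS2pos : 0 < S2 := Finset.sum_pos (fun i _ => by positivity) Finset.univ_nonempty
      have hT2pos : 0 < T2 := Finset.sum_pos (fun j _ => by positivity) Finset.univ_nonempty
      have hUval : ∀ t : ℝ, U t = α * Real.log (∑ i, Real.exp (P i + dd i * t) ^ 2)
          + (k : ℝ) * Real.log (∑ j : Fin (k + 1),
              Real.exp (P (embX m k h j) + dd (embX m k h j) * t) ^ 2)
          + φ (C ↑t) := by
        intro t
        show FX m k φ C ↑t = _
        have e1 : nsq ((C (↑t : ℂ)).1) = ∑ i, Real.exp (P i + dd i * t) ^ 2 := by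
          unfold nsq
          refine Finset.sum_congr rfl (fun i _ => ?_)
          rw [show (C (↑t : ℂ)).1 i = Complex.exp ((P i : ℂ) + (dd i : ℂ) * (t : ℂ)) from rfl,
            habsC]
        have e2 : nsq ((C (↑t : ℂ)).2) = ∑ j : Fin (k + 1),
            Real.exp (P (embX m k h j) + dd (embX m k h j) * t) ^ 2 := by
          unfold nsq
          refine Finset.sum_congr rfl (fun j _ => ?_)
          rw [show (C (↑t : ℂ)).2 j = Complex.exp (((P (embX m k h j)) : ℂ)
            + ((dd (embX m k h j)) : ℂ) * (t : ℂ)) from rfl, habsC]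
        unfold FX
        rw [e1, e2, ← hα]
      have hC0 : C 0 = (zB, oneζ) := by
        rw [hC]
        refine Prod.ext ?_ ?_ <;> dsimp only
        · funext i
          rw [mul_zero, add_zero]
          by_cases hik : (i : ℕ) ≤ k
          · simp only [hP, if_pos hik, hzB, Complex.ofReal_zero, Complex.exp_zero]
          · simp only [hP, if_neg hik, hzB]
            rw [← Complex.ofReal_exp, hs, Real.exp_log hζ]
        · funext j
          rw [mul_zero, add_zero, hPemb j]
          simp only [honeζ, Complex.ofReal_zero, Complex.exp_zero]
      have hU0 : U 0 = α * Real.log N1 + (k : ℝ) * Real.log N2 + φ (zB, oneζ) := by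
        show FX m k φ C ((0 : ℝ) : ℂ) = _
        unfold FX
        rw [show ((0 : ℝ) : ℂ) = (0 : ℂ) from Complex.ofReal_zero, hC0]
        dsimp only
        rw [hnsq1, hnsq2, ← hα]
      have hexp1 : ∀ i, P i + dd i * 1 = y i := by
        intro i
        simp only [hdd]
        ring
      have hexp2 : ∀ i, P i + dd i * 2 = y i + dd i := by
        intro i
        simp only [hdd]
        ring
      have hexpT2 : ∀ j : Fin (k + 1),
          P (embX m k h j) + dd (embX m k h j) * 2 = y (embX m k h j) * 2 := by
        intro j
        rw [hPemb j, hddemb j]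
        ring
      have hU1 : U 1 = α * Real.log S1 + (k : ℝ) * Real.log T1 + φ (C 1) := by
        have e1 : ∑ i, Real.exp (P i + dd i * 1) ^ 2 = S1 :=
          Finset.sum_congr rfl (fun i _ => by rw [hexp1 i])
        have e2 : ∑ j : Fin (k + 1), Real.exp (P (embX m k h j) + dd (embX m k h j) * 1) ^ 2
            = T1 := Finset.sum_congr rfl (fun j _ => by rw [hexp1 (embX m k h j)])
        rw [hUval 1, e1, e2, Complex.ofReal_one]
      have hU2 : U 2 = α * Real.log S2 + (k : ℝ) * Real.log T2 + φ (C 2) := by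
        have e1 : ∑ i, Real.exp (P i + dd i * 2) ^ 2 = S2 :=
          Finset.sum_congr rfl (fun i _ => by rw [hexp2 i])
        have e2 : ∑ j : Fin (k + 1), Real.exp (P (embX m k h j) + dd (embX m k h j) * 2) ^ 2
            = T2 := Finset.sum_congr rfl (fun j _ => by rw [hexpT2 j])
        rw [hUval 2, e1, e2]
        norm_num
      have hC1 : C 1 = (fun i => (Real.exp (y i) : ℂ),
          fun j => (Real.exp (y (embX m k h j)) : ℂ)) := by
        rw [hC]
        refine Prod.ext ?_ ?_ <;> dsimp only
        · funext i
          rw [mul_one, ← Complex.ofReal_add, ← Complex.ofReal_exp]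
          congr 1
          simp only [hdd]
          ring
        · funext j
          rw [mul_one, ← Complex.ofReal_add, ← Complex.ofReal_exp]
          congr 1
          rw [hPemb j, hddemb j, zero_add]
      have hφ1 : -ε < φ (C 1) := by rw [hC1]; exact hy
      have hφ2 : φ (C 2) ≤ 0 := hsup.1 ⟨C 2, hmemC 2, rfl⟩
      -- suprema
      have hF2ne : (Finset.univ.filter (fun i : Fin (m + 1) => k + 1 ≤ (i : ℕ))).Nonempty := by
        refine ⟨Fin.last m, ?_⟩
        simp only [Finset.mem_filter, Finset.mem_univ, true_and, Fin.val_last]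
        omega
      set A : ℝ := Finset.univ.sup' Finset.univ_nonempty
        (fun j : Fin (k + 1) => y (embX m k h j)) with hA
      set B : ℝ := (Finset.univ.filter (fun i : Fin (m + 1) => k + 1 ≤ (i : ℕ))).sup' hF2ne y
        with hB
      set M : ℝ := max A (B - s) with hM
      have hyleA : ∀ j : Fin (k + 1), y (embX m k h j) ≤ A := by
        intro j
        rw [hA]
        exact Finset.le_sup' (fun j : Fin (k + 1) => y (embX m k h j)) (Finset.mem_univ j)
      have hddle : ∀ i : Fin (m + 1), dd i ≤ M := by
        intro i
        by_cases hik : (i : ℕ) ≤ k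
        · have hyA : y i ≤ A := by
            have hj : embX m k h ⟨(i : ℕ), by omega⟩ = i := Fin.ext rfl
            calc y i = y (embX m k h ⟨(i : ℕ), by omega⟩) := by rw [hj]
            _ ≤ A := hyleA _
          simp only [hdd, hP, if_pos hik]
          rw [hM, sub_zero]
          exact le_trans hyA (le_max_left _ _)
        · have hyB : y i ≤ B := by
            rw [hB]
            exact Finset.le_sup' _ (Finset.mem_filter.mpr ⟨Finset.mem_univ _, by omega⟩)
          simp only [hdd, hP, if_neg hik]
          rw [hM]
          exact le_trans (by linarith) (le_max_right _ _)
      -- lower bounds for S1, T1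
      obtain ⟨jA, _, hjA⟩ := Finset.exists_mem_eq_sup' Finset.univ_nonempty
        (fun j : Fin (k + 1) => y (embX m k h j))
      obtain ⟨iB, hiBmem, hiB⟩ := Finset.exists_mem_eq_sup' hF2ne y
      rw [← hA] at hjA
      rw [← hB] at hiB
      have hlogS1 : 2 * max A B ≤ Real.log S1 := by
        have htermA : Real.exp A ^ 2 ≤ S1 := by
          have := Finset.single_le_sum (f := fun i => Real.exp (y i) ^ 2)
            (fun i _ => by positivity) (Finset.mem_univ (embX m k h jA))
          rw [hS1]
          calc Real.exp A ^ 2 = Real.exp (y (embX m k h jA)) ^ 2 := by rw [hjA]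
          _ ≤ _ := this
        have htermB : Real.exp B ^ 2 ≤ S1 := by
          have := Finset.single_le_sum (f := fun i => Real.exp (y i) ^ 2)
            (fun i _ => by positivity) (Finset.mem_univ iB)
          rw [hS1]
          calc Real.exp B ^ 2 = Real.exp (y iB) ^ 2 := by rw [hiB]
          _ ≤ _ := this
        have hterm : Real.exp (max A B) ^ 2 ≤ S1 := by
          rcases max_cases A B with ⟨he, _⟩ | ⟨he, _⟩ <;> rw [he]
          · exact htermA
          · exact htermB
        calc 2 * max A B = Real.log (Real.exp (max A B) ^ 2) := by
              rw [Real.log_pow, Real.log_exp]; push_cast; ring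
        _ ≤ Real.log S1 := Real.log_le_log (by positivity) hterm
      have hlogT1 : 2 * A ≤ Real.log T1 := by
        have hterm : Real.exp A ^ 2 ≤ T1 := by
          have := Finset.single_le_sum (f := fun j : Fin (k + 1) =>
            Real.exp (y (embX m k h j)) ^ 2) (fun j _ => by positivity) (Finset.mem_univ jA)
          rw [hT1]
          calc Real.exp A ^ 2 = Real.exp (y (embX m k h jA)) ^ 2 := by rw [hjA]
          _ ≤ _ := this
        calc 2 * A = Real.log (Real.exp A ^ 2) := by
              rw [Real.log_pow, Real.log_exp]; push_cast; ring
        _ ≤ Real.log T1 := Real.log_le_log (by positivity) hterm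
      -- upper bounds for S2, T2
      have hlogS2 : Real.log S2 ≤ Real.log S1 + 2 * M := by
        have hsum : S2 ≤ S1 * Real.exp M ^ 2 := by
          rw [hS2, hS1, Finset.sum_mul]
          refine Finset.sum_le_sum (fun i _ => ?_)
          have : Real.exp (y i + dd i) ≤ Real.exp (y i) * Real.exp M := by
            rw [← Real.exp_add]
            exact Real.exp_le_exp.mpr (by linarith [hddle i])
          calc Real.exp (y i + dd i) ^ 2 ≤ (Real.exp (y i) * Real.exp M) ^ 2 := by
                apply pow_le_pow_left₀ (by positivity) this
          _ = Real.exp (y i) ^ 2 * Real.exp M ^ 2 := by ring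
        calc Real.log S2 ≤ Real.log (S1 * Real.exp M ^ 2) := Real.log_le_log hS2pos hsum
        _ = Real.log S1 + 2 * M := by
              rw [Real.log_mul hS1pos.ne' (by positivity), Real.log_pow, Real.log_exp]
              push_cast; ring
      have hlogT2 : Real.log T2 ≤ Real.log T1 + 2 * A := by
        have hsum : T2 ≤ T1 * Real.exp A ^ 2 := by
          rw [hT2, hT1, Finset.sum_mul]
          refine Finset.sum_le_sum (fun j _ => ?_)
          have : Real.exp (y (embX m k h j) * 2)
              ≤ Real.exp (y (embX m k h j)) * Real.exp A := by
            rw [← Real.exp_add]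
            exact Real.exp_le_exp.mpr (by linarith [hyleA j])
          calc Real.exp (y (embX m k h j) * 2) ^ 2
              ≤ (Real.exp (y (embX m k h j)) * Real.exp A) ^ 2 := by
                apply pow_le_pow_left₀ (by positivity) this
          _ = Real.exp (y (embX m k h j)) ^ 2 * Real.exp A ^ 2 := by ring
        calc Real.log T2 ≤ Real.log (T1 * Real.exp A ^ 2) := Real.log_le_log hT2pos hsum
        _ = Real.log T1 + 2 * A := by
              rw [Real.log_mul hT1pos.ne' (by positivity), Real.log_pow, Real.log_exp]
              push_cast; ring
      -- convexity
      have hcx := hconvU.2 (Set.mem_univ (0 : ℝ)) (Set.mem_univ (2 : ℝ))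
        (by norm_num : (0:ℝ) ≤ 1/2) (by norm_num : (0:ℝ) ≤ 1/2)
        (by norm_num : (1:ℝ)/2 + 1/2 = 1)
      rw [smul_eq_mul, smul_eq_mul, smul_eq_mul, smul_eq_mul,
        show (1:ℝ)/2 * 0 + 1/2 * 2 = 1 by norm_num] at hcx
      -- min inequality
      have hMeq : min 0 s ≤ max A B - M := by
        rcases le_total 0 s with h0 | h0
        · have hle : max A (B - s) ≤ max A B := max_le_max le_rfl (by linarith)
          rw [min_eq_left h0, hM]
          linarith
        · have hle : max A (B - s) ≤ max A B - s := by
            apply max_le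
            · have := le_max_left A B; linarith
            · have := le_max_right A B; linarith
          rw [min_eq_right h0, hM]
          linarith
      have hminle : min 0 (2 * α * s) ≤ 2 * α * min 0 s := by
        rcases le_total 0 s with h0 | h0
        · rw [min_eq_left h0, mul_zero, min_eq_left (by positivity)]
        · rw [min_eq_right h0, min_eq_right (by nlinarith : 2 * α * s ≤ 0)]
      -- assemble
      have m1 := mul_le_mul_of_nonneg_left hlogS2 hα0.le
      have m2 := mul_le_mul_of_nonneg_left hlogS1 hα0.le
      have m3 := mul_le_mul_of_nonneg_left hlogT2 (by positivity : (0:ℝ) ≤ (k:ℝ))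
      have m4 := mul_le_mul_of_nonneg_left hlogT1 (by positivity : (0:ℝ) ≤ (k:ℝ))
      have m5 := mul_le_mul_of_nonneg_left hMeq (by positivity : (0:ℝ) ≤ 2 * α)
      linarith [hU0, hU1, hU2, hφ1, hφ2, hcx, hminle, m1, m2, m3, m4, m5]
    clear_value α s N1 N2 zB oneζ
    by_contra hcon
    push_neg at hcon
    have := hper ((min 0 (2 * α * s)
      - (φ (zB, oneζ) + (α * Real.log N1 + (k : ℝ) * Real.log N2))) / 4) (by linarith)
    linarith
  clear_value α s N1 N2 zB oneζ
  linarith [hmain]
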